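/- arXiv:2412.00418 — 2 statements merged into one kernel-verified Lean document; each statement's English description precedes it below -/
import Mathlib

section
/- Let μ, ν be vectors in a real inner product space with μ ≠ ν, let R > 0, and let p', q' be real numbers with 0 < p' ≤ q'. Define w* = (R/‖ν−μ‖)•(ν−μ), b* = −(1/2)⟪μ+ν, w*⟫, and the test class-1 aggregated mean m₁' = (q'/(p'+q'))•μ + (p'/(p'+q'))•ν. Then the logistic loss of the training-optimal classifier at m₁' satisfies log(1 + exp(−(⟪m₁', w*⟫ + b*))) ≥ R·(q'−p')·‖μ−ν‖/(2(p'+q')). -/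
/-!
At an affine combination `a • μ + c • ν` (`a + c = 1`) the decision value of `(w*, b*)` is
`(c - a) / 2 * ⟪ν - μ, w*⟫ = (c - a) * R * ‖ν - μ‖ / 2`. At `m₁'` this is exactly the negative of
the claimed bound, and `log (1 + exp (-z)) ≥ -z`.
-/

open Real

theorem Real.le_log_one_add_exp (x : ℝ) : x ≤ log (1 + exp x) := by
  calc x = log (exp x) := (log_exp x).symm
    _ ≤ log (1 + exp x) := log_le_log (exp_pos x) (by linarith)

section InnerProduct

variable {E : Type*} [NormedAddCommGroup E] [InnerProductSpace ℝ E]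

theorem real_inner_div_norm_smul_self (v : E) (R : ℝ) :
    inner ℝ v ((R / ‖v‖) • v) = R * ‖v‖ := by
  rw [real_inner_smul_right, real_inner_self_eq_norm_sq]
  rcases eq_or_ne ‖v‖ 0 with hv | hv
  · simp [hv]
  · field_simp

theorem inner_affineCombination_sub_half_inner_add {a c : ℝ} (hac : a + c = 1) (μ ν w : E) :
    inner ℝ (a • μ + c • ν) w - 1 / 2 * inner ℝ (μ + ν) w
      = (c - a) / 2 * inner ℝ (ν - μ) w := by
  simp only [inner_add_left, inner_sub_left, real_inner_smul_left]
  linear_combination (inner ℝ μ w + inner ℝ ν w) / 2 * hac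

end InnerProduct

theorem logistic_loss_at_test_mean_lower_bound_general
    {E : Type*} [NormedAddCommGroup E] [InnerProductSpace ℝ E]
    (μ ν : E) (R : ℝ)
    (p' q' : ℝ) (hp' : 0 < p') (hpq' : p' ≤ q')
    (w : E) (hw : w = (R / ‖ν - μ‖) • (ν - μ))
    (b : ℝ) (hb : b = -(1 / 2) * (inner ℝ (μ + ν) w : ℝ))
    (m₁' : E)
    (hm₁' : m₁' = (q' / (p' + q')) • μ + (p' / (p' + q')) • ν) :
    Real.log (1 + Real.exp (-((inner ℝ m₁' w : ℝ) + b)))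
      ≥ R * (q' - p') * ‖μ - ν‖ / (2 * (p' + q')) := by
  have hsum : p' + q' ≠ 0 := by linarith
  have hweights : q' / (p' + q') + p' / (p' + q') = 1 := by field_simp; ring
  have hmargin : inner ℝ m₁' w + b
      = (p' / (p' + q') - q' / (p' + q')) / 2 * (R * ‖ν - μ‖) := by
    rw [hb, hm₁', ← real_inner_div_norm_smul_self (ν - μ) R, ← hw,
      ← inner_affineCombination_sub_half_inner_add hweights]
    ring
  have hloss : -(inner ℝ m₁' w + b) = R * (q' - p') * ‖μ - ν‖ / (2 * (p' + q')) := by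
    rw [hmargin, norm_sub_rev]
    field_simp
    ring
  exact hloss ▸ le_log_one_add_exp _

theorem logistic_loss_at_test_mean_lower_bound
    {E : Type*} [NormedAddCommGroup E] [InnerProductSpace ℝ E]
    (μ ν : E) (hμν : μ ≠ ν) (R : ℝ) (hR : 0 < R)
    (p' q' : ℝ) (hp' : 0 < p') (hpq' : p' ≤ q')
    (w : E) (hw : w = (R / ‖ν - μ‖) • (ν - μ))
    (b : ℝ) (hb : b = -(1 / 2) * (inner ℝ (μ + ν) w : ℝ))
    (m₁' : E)
    (hm₁' : m₁' = (q' / (p' + q')) • μ + (p' / (p' + q')) • ν) :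
    Real.log (1 + Real.exp (-((inner ℝ m₁' w : ℝ) + b)))
      ≥ R * (q' - p') * ‖μ - ν‖ / (2 * (p' + q')) :=
  logistic_loss_at_test_mean_lower_bound_general μ ν R p' q' hp' hpq' w hw b hb m₁' hm₁'
end

section
/- Let m ≥ 0 and s > 0, and let ν = N(m, s²) be the Gaussian measure on ℝ with mean m and variance s². Then the expected logistic loss of a class-1 example whose score is distributed according to ν satisfies ∫ log(1 + exp(−z)) dν(z) ≥ log 2 · (1/2 − m/(s·√(2π))). -/
/-!
The logistic loss is nonnegative and at least `log 2` on `z ≤ 0`, so its expectation is at least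
`log 2 · ν(-∞, 0]`. By symmetry `ν(-∞, m] = 1/2`, and `ν(0, m]` is at most `m` times the peak
`1 / (s√(2π))` of the Gaussian density.
-/

open MeasureTheory ProbabilityTheory Real Set
open scoped NNReal

lemma log_two_le_log_one_add_exp_neg {z : ℝ} (hz : z ≤ 0) : log 2 ≤ log (1 + exp (-z)) := by
  gcongr
  linarith [one_le_exp (neg_nonneg.2 hz)]

lemma log_one_add_exp_neg_nonneg (z : ℝ) : 0 ≤ log (1 + exp (-z)) :=
  log_nonneg (by linarith [exp_nonneg (-z)])

lemma log_one_add_exp_neg_le (z : ℝ) : log (1 + exp (-z)) ≤ log 2 + |z| :=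
  calc log (1 + exp (-z)) ≤ log (2 * exp |z|) := by
        gcongr
        linarith [one_le_exp (abs_nonneg z), exp_le_exp.2 (neg_le_abs z)]
    _ = log 2 + |z| := by rw [log_mul two_ne_zero (exp_pos _).ne', log_exp]

lemma integrable_log_one_add_exp_neg {μ : Measure ℝ} [IsFiniteMeasure μ] (h : Integrable id μ) :
    Integrable (fun z ↦ log (1 + exp (-z))) μ := by
  refine ((integrable_const (log 2)).add h.abs).mono'
    (by fun_prop : Measurable _).aestronglyMeasurable (ae_of_all _ fun z ↦ ?_)
  rw [norm_of_nonneg (log_one_add_exp_neg_nonneg z)]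
  exact log_one_add_exp_neg_le z

lemma log_two_mul_measureReal_Iic_le_integral {μ : Measure ℝ} [IsFiniteMeasure μ]
    (h : Integrable (fun z ↦ log (1 + exp (-z))) μ) :
    log 2 * μ.real (Iic 0) ≤ ∫ z, log (1 + exp (-z)) ∂μ := by
  have hind : (Iic (0 : ℝ)).indicator (fun _ ↦ log 2) ≤ fun z ↦ log (1 + exp (-z)) :=
    indicator_le' (fun _ hz ↦ log_two_le_log_one_add_exp_neg hz)
      (fun z _ ↦ log_one_add_exp_neg_nonneg z)
  calc log 2 * μ.real (Iic 0) = ∫ z, (Iic 0).indicator (fun _ ↦ log 2) z ∂μ := by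
        rw [integral_indicator_const _ measurableSet_Iic, smul_eq_mul, mul_comm]
    _ ≤ _ := integral_mono ((integrable_const _).indicator measurableSet_Iic) h hind

lemma measureReal_Iic_eq_half_of_map_const_sub {ν : Measure ℝ} [IsProbabilityMeasure ν]
    [NullSingletonClass ν] {a : ℝ} (h : ν.map (2 * a - ·) = ν) : ν.real (Iic a) = 1 / 2 := by
  have hsymm : ν.real (Ioi a) = ν.real (Iic a) := by
    rw [measureReal_congr Ioi_ae_eq_Ici]
    nth_rewrite 1 [← h]
    rw [map_measureReal_apply (by fun_prop) measurableSet_Ici]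
    congr 1
    ext x
    simp only [mem_preimage, mem_Ici, mem_Iic]
    constructor <;> intro <;> linarith
  have htotal : ν.real (Iic a) + ν.real (Ioi a) = 1 := by
    rw [← compl_Iic, measureReal_add_measureReal_compl measurableSet_Iic, probReal_univ]
  linarith

namespace ProbabilityTheory

variable {v : ℝ≥0}

lemma measureReal_gaussianReal_Iic_self (μ : ℝ) (hv : v ≠ 0) :
    (gaussianReal μ v).real (Iic μ) = 1 / 2 := by
  have := nullSingletonClass_gaussianReal (μ := μ) hv
  refine measureReal_Iic_eq_half_of_map_const_sub ?_
  rw [gaussianReal_map_const_sub]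
  ring_nf

lemma gaussianPDFReal_le (μ : ℝ) (v : ℝ≥0) (x : ℝ) :
    gaussianPDFReal μ v x ≤ (√(2 * π * v))⁻¹ := by
  rw [gaussianPDFReal]
  refine mul_le_of_le_one_right (by positivity) (exp_le_one_iff.2 ?_)
  exact div_nonpos_of_nonpos_of_nonneg (neg_nonpos.2 (sq_nonneg _)) (by positivity)

lemma gaussianReal_le_mul_volume (μ : ℝ) (hv : v ≠ 0) (s : Set ℝ) :
    gaussianReal μ v s ≤ ENNReal.ofReal (√(2 * π * v))⁻¹ * volume s := by
  rw [gaussianReal_apply μ hv, ← setLIntegral_const]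
  exact lintegral_mono fun x ↦ ENNReal.ofReal_le_ofReal (gaussianPDFReal_le μ v x)

lemma one_half_sub_le_measureReal_gaussianReal_Iic {μ a : ℝ} (hv : v ≠ 0) (ha : a ≤ μ) :
    1 / 2 - (μ - a) / √(2 * π * v) ≤ (gaussianReal μ v).real (Iic a) := by
  have hIoc : (gaussianReal μ v).real (Ioc a μ) ≤ (μ - a) / √(2 * π * v) := by
    have := gaussianReal_le_mul_volume μ hv (Ioc a μ)
    rw [Real.volume_Ioc, ← ENNReal.ofReal_mul (by positivity)] at this
    rw [measureReal_def, div_eq_inv_mul]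
    exact ENNReal.toReal_le_of_le_ofReal (by positivity) this
  have hsplit : (gaussianReal μ v).real (Iic μ)
      = (gaussianReal μ v).real (Iic a) + (gaussianReal μ v).real (Ioc a μ) := by
    rw [← Iic_union_Ioc_eq_Iic ha,
      measureReal_union (Iic_disjoint_Ioc le_rfl) measurableSet_Ioc]
  linarith [measureReal_gaussianReal_Iic_self μ hv]

end ProbabilityTheory

theorem expected_logistic_loss_gaussian_lower_bound
    (m s : ℝ) (hm : 0 ≤ m) (hs : 0 < s) :
    ∫ z, Real.log (1 + Real.exp (-z)) ∂(gaussianReal m (s ^ 2).toNNReal)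
      ≥ Real.log 2 * (1 / 2 - m / (s * Real.sqrt (2 * Real.pi))) := by
  have hv : (s ^ 2).toNNReal ≠ 0 := by simpa using hs.ne'
  have hsd : √(2 * π * (s ^ 2).toNNReal) = s * √(2 * π) := by
    rw [Real.coe_toNNReal _ (sq_nonneg s), sqrt_mul (by positivity), sqrt_sq hs.le, mul_comm]
  have hmass := one_half_sub_le_measureReal_gaussianReal_Iic (μ := m) (a := 0) hv hm
  rw [sub_zero, hsd] at hmass
  calc log 2 * (1 / 2 - m / (s * √(2 * π)))
      ≤ log 2 * (gaussianReal m (s ^ 2).toNNReal).real (Iic 0) := by gcongr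
    _ ≤ _ := log_two_mul_measureReal_Iic_le_integral
        (integrable_log_one_add_exp_neg ((memLp_id_gaussianReal 1).integrable le_rfl))
end
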